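/- arXiv:1810.05722 — 3 statements merged into one kernel-verified Lean document; each statement's English description precedes it below -/
import Mathlib

section
/- Let f and g be continuous functions from ℝ to ℂ for which there exist constants C_f, C_g > 0 and positive integers N_f, N_g such that |f(x)| ≤ C_f(1+|x|)^{N_f} and |g(x)| ≤ C_g(1+|x|)^{N_g} for all x ∈ ℝ. If ∫_{-∞}^{∞} f(x) e^{-iωx} e^{-x²} dx = ∫_{-∞}^{∞} g(x) e^{-iωx} e^{-x²} dx for every real constant ω, then f(x) = g(x) for all x ∈ ℝ. -/
/-!
Multiplying `f - g` by the Gaussian gives a continuous integrable function `F` whose Fourier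
transform at `ω` is the difference of the two hypothesised integrals at frequency `2πω`, hence
zero. Fourier inversion then forces `F = 0`, and the Gaussian has no zeros.
-/

open MeasureTheory FourierTransform

lemma integrable_one_add_abs_pow_mul_exp_neg_sq (N : ℕ) :
    Integrable fun x : ℝ ↦ (1 + |x|) ^ N * Real.exp (-x ^ 2) := by
  have monomial (k : ℕ) : Integrable fun x : ℝ ↦ |x| ^ k * Real.exp (-x ^ 2) := by
    have hk : (-1 : ℝ) < k := by linarith [k.cast_nonneg (α := ℝ)]
    simpa [abs_mul, Real.rpow_natCast] using
      (integrable_rpow_mul_exp_neg_mul_sq one_pos hk).abs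
  have binomial (x : ℝ) : (1 + |x|) ^ N * Real.exp (-x ^ 2) =
      ∑ k ∈ Finset.range (N + 1), |x| ^ k * Real.exp (-x ^ 2) * N.choose k := by
    rw [add_comm, add_pow, Finset.sum_mul]
    simp only [one_pow, mul_one, mul_right_comm]
  simp only [binomial]
  exact integrable_finsetSum _ fun k _ ↦ (monomial k).mul_const _

theorem Continuous.eq_zero_of_fourier_eq_zero {V E : Type*} [NormedAddCommGroup V]
    [InnerProductSpace ℝ V] [FiniteDimensional ℝ V] [MeasurableSpace V] [BorelSpace V]
    [NormedAddCommGroup E] [NormedSpace ℂ E] [CompleteSpace E] {f : V → E}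
    (hc : Continuous f) (hi : Integrable f) (hF : 𝓕 f = 0) : f = 0 := by
  have inversion := hc.fourierInv_fourier_eq hi (by simp [hF])
  rw [← inversion, hF]
  ext v
  simp [Real.fourierInv_eq]

lemma norm_cexp_neg_sq (x : ℝ) : ‖Complex.exp (-((x : ℂ) ^ 2))‖ = Real.exp (-x ^ 2) := by
  rw [Complex.norm_exp, ← Complex.ofReal_pow, ← Complex.ofReal_neg, Complex.ofReal_re]

lemma integrable_mul_cexp_neg_sq {f : ℝ → ℂ} (hf : AEStronglyMeasurable f) {C : ℝ} {N : ℕ}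
    (hfb : ∀ x, ‖f x‖ ≤ C * (1 + |x|) ^ N) :
    Integrable fun x : ℝ ↦ f x * Complex.exp (-((x : ℂ) ^ 2)) := by
  refine ((integrable_one_add_abs_pow_mul_exp_neg_sq N).const_mul C).mono'
    (hf.mul (by fun_prop)) (.of_forall fun x ↦ ?_)
  rw [norm_mul, norm_cexp_neg_sq, ← mul_assoc]
  exact mul_le_mul_of_nonneg_right (hfb x) (Real.exp_pos _).le

lemma integrable_mul_modulation_mul_cexp_neg_sq {f : ℝ → ℂ} (hf : AEStronglyMeasurable f)
    {C : ℝ} {N : ℕ}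
    (hfb : ∀ x, ‖f x‖ ≤ C * (1 + |x|) ^ N) (ω : ℝ) :
    Integrable fun x : ℝ ↦
      f x * Complex.exp (-(Complex.I * ω * x)) * Complex.exp (-((x : ℂ) ^ 2)) := by
  refine integrable_mul_cexp_neg_sq (C := C) (N := N) (by fun_prop) fun x ↦ ?_
  have : -(Complex.I * ω * x) = ((-(ω * x) : ℝ) : ℂ) * Complex.I := by push_cast; ring
  rw [norm_mul, this, Complex.norm_exp_ofReal_mul_I, mul_one]
  exact hfb x

lemma fourier_mul_cexp_neg_sq (f : ℝ → ℂ) (ω : ℝ) :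
    𝓕 (fun x : ℝ ↦ f x * Complex.exp (-((x : ℂ) ^ 2))) ω =
      ∫ x : ℝ, f x * Complex.exp (-(Complex.I * (2 * Real.pi * ω : ℝ) * x)) *
        Complex.exp (-((x : ℂ) ^ 2)) := by
  rw [Real.fourier_eq']
  congr 1 with x
  simp only [RCLike.inner_apply, starRingEnd_apply, star_trivial, smul_eq_mul]
  push_cast
  ring_nf

theorem eq_of_integral_against_gaussian_modulations_eq_general (f g : ℝ → ℂ)
    (hf : Continuous f) (hg : Continuous g)
    (Cf Cg : ℝ) (Nf Ng : ℕ)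
    (hfb : ∀ x : ℝ, ‖f x‖ ≤ Cf * (1 + |x|) ^ Nf)
    (hgb : ∀ x : ℝ, ‖g x‖ ≤ Cg * (1 + |x|) ^ Ng)
    (h : ∀ ω : ℝ,
        ∫ x : ℝ, f x * Complex.exp (-(Complex.I * ω * x)) * Complex.exp (-((x : ℂ) ^ 2))
          = ∫ x : ℝ, g x * Complex.exp (-(Complex.I * ω * x)) * Complex.exp (-((x : ℂ) ^ 2))) :
    ∀ x : ℝ, f x = g x := by
  set F : ℝ → ℂ := fun x ↦ (f x - g x) * Complex.exp (-((x : ℂ) ^ 2))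
  have hF_integrable : Integrable F := by
    simpa only [F, sub_mul, Pi.sub_def] using
      (integrable_mul_cexp_neg_sq hf.aestronglyMeasurable hfb).sub
        (integrable_mul_cexp_neg_sq hg.aestronglyMeasurable hgb)
  have hF_fourier : 𝓕 F = 0 := by
    ext ω
    rw [fourier_mul_cexp_neg_sq, Pi.zero_apply, ← sub_eq_zero.mpr (h (2 * Real.pi * ω)),
      ← integral_sub (integrable_mul_modulation_mul_cexp_neg_sq hf.aestronglyMeasurable hfb _)
        (integrable_mul_modulation_mul_cexp_neg_sq hg.aestronglyMeasurable hgb _)]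
    simp only [sub_mul]
  intro x
  have hFx : F x = 0 := congrFun ((by fun_prop : Continuous F).eq_zero_of_fourier_eq_zero
    hF_integrable hF_fourier) x
  simpa [F, sub_eq_zero] using hFx

/-- Two continuous functions of polynomial growth which have the same integrals against
all the test functions `x ↦ e^{-iωx} e^{-x²}` are equal everywhere. -/
theorem eq_of_integral_against_gaussian_modulations_eq (f g : ℝ → ℂ)
    (hf : Continuous f) (hg : Continuous g)
    (Cf Cg : ℝ) (Nf Ng : ℕ) (hCf : 0 < Cf) (hCg : 0 < Cg) (hNf : 0 < Nf) (hNg : 0 < Ng)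
    (hfb : ∀ x : ℝ, ‖f x‖ ≤ Cf * (1 + |x|) ^ Nf)
    (hgb : ∀ x : ℝ, ‖g x‖ ≤ Cg * (1 + |x|) ^ Ng)
    (h : ∀ ω : ℝ,
        ∫ x : ℝ, f x * Complex.exp (-(Complex.I * ω * x)) * Complex.exp (-((x : ℂ) ^ 2))
          = ∫ x : ℝ, g x * Complex.exp (-(Complex.I * ω * x)) * Complex.exp (-((x : ℂ) ^ 2))) :
    ∀ x : ℝ, f x = g x :=
  eq_of_integral_against_gaussian_modulations_eq_general f g hf hg Cf Cg Nf Ng hfb hgb h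
end

section
/- Let f : ℝ → ℂ be differentiable at every point of ℝ, and suppose that both f and its derivative f' are locally integrable functions of slow growth. Then for every Schwartz function φ, lim_{r→+∞} f(r)φ(r) = 0 and lim_{r→-∞} f(r)φ(r) = 0. -/
open MeasureTheory Filter

/-- A function `φ : ℝ → ℂ` is a Schwartz function if it is infinitely differentiable and
`x^m φ⁽ⁿ⁾(x) → 0` as `x → ±∞` for all integers `m, n ≥ 0`. -/
def IsSchwartz (φ : ℝ → ℂ) : Prop :=
  ContDiff ℝ (⊤ : ℕ∞) φ ∧
    ∀ m n : ℕ,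
      Tendsto (fun x : ℝ => (x : ℂ) ^ m * iteratedDeriv n φ x) atTop (nhds 0) ∧
      Tendsto (fun x : ℝ => (x : ℂ) ^ m * iteratedDeriv n φ x) atBot (nhds 0)

/-- `f : ℝ → ℂ` is a locally integrable function of slow growth. -/
def SlowGrowth (f : ℝ → ℂ) : Prop :=
  LocallyIntegrable f volume ∧
    ∃ C : ℝ, 0 < C ∧ ∃ N : ℕ, ∀ R : ℝ, 0 < R → ∫ x in (-R)..R, ‖f x‖ ≤ C * (1 + R) ^ N

/-- If `f` is everywhere differentiable and `f`, `f'` are locally integrable functions of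
slow growth, then for every Schwartz function `φ` we have `f(r)φ(r) → 0` as `r → ±∞`. -/
theorem slowGrowth_mul_schwartz_tendsto_zero (f : ℝ → ℂ)
    (hdiff : Differentiable ℝ f) (hf : SlowGrowth f) (hf' : SlowGrowth (deriv f))
    (φ : ℝ → ℂ) (hφ : IsSchwartz φ) :
    Tendsto (fun r : ℝ => f r * φ r) atTop (nhds 0) ∧
    Tendsto (fun r : ℝ => f r * φ r) atBot (nhds 0) := by
  obtain ⟨hloc, C, hC, N, hN⟩ := hf'
  have hint : ∀ a b : ℝ, IntervalIntegrable (deriv f) volume a b := fun a b =>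
    (hloc.integrableOn_isCompact isCompact_uIcc).intervalIntegrable
  -- pointwise polynomial bound on f
  have key : ∀ r : ℝ, ‖f r‖ ≤ ‖f 0‖ + C * (1 + |r|) ^ N := by
    intro r
    rcases eq_or_ne r 0 with rfl | hr
    · have : (0:ℝ) ≤ C * (1 + |(0:ℝ)|) ^ N := by positivity
      simp only [abs_zero] at this ⊢; linarith
    · have hR : 0 < |r| := abs_pos.mpr hr
      have hFTC : ∫ x in (0:ℝ)..r, deriv f x = f r - f 0 :=
        intervalIntegral.integral_deriv_eq_sub (fun x _ => hdiff x) (hint 0 r)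
      have h1 : ‖f r - f 0‖ ≤ |∫ x in (0:ℝ)..r, ‖deriv f x‖| := by
        rw [← hFTC]; exact intervalIntegral.norm_integral_le_abs_integral_norm
      have h2 : |∫ x in (0:ℝ)..r, ‖deriv f x‖| ≤ |∫ x in (-|r|)..|r|, ‖deriv f x‖| := by
        apply intervalIntegral.abs_integral_mono_interval
        · apply Set.Ioc_subset_Ioc
          · exact le_min ((min_le_left _ _).trans (by linarith)) ((min_le_left _ _).trans (neg_abs_le r))
          · exact max_le ((abs_nonneg r).trans (le_max_right _ _)) ((le_abs_self r).trans (le_max_right _ _))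
        · filter_upwards with x using norm_nonneg _
        · exact (hint _ _).norm
      have h3 : |∫ x in (-|r|)..|r|, ‖deriv f x‖| = ∫ x in (-|r|)..|r|, ‖deriv f x‖ :=
        abs_of_nonneg (intervalIntegral.integral_nonneg (by linarith) fun x _ => norm_nonneg _)
      have h4 := hN |r| hR
      calc ‖f r‖ = ‖f 0 + (f r - f 0)‖ := by ring_nf
        _ ≤ ‖f 0‖ + ‖f r - f 0‖ := norm_add_le _ _
        _ ≤ ‖f 0‖ + C * (1 + |r|) ^ N := by
            have := h1.trans (h2.trans_eq h3)
            linarith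
  -- reduce to both limits
  have main : ∀ l : Filter ℝ, (∀ᶠ r in l, 1 ≤ |r|) →
      Tendsto (fun x : ℝ => φ x) l (nhds 0) →
      Tendsto (fun x : ℝ => (x : ℂ) ^ N * φ x) l (nhds 0) →
      Tendsto (fun r : ℝ => f r * φ r) l (nhds 0) := by
    intro l hl h0 hNφ
    rw [tendsto_zero_iff_norm_tendsto_zero]
    apply squeeze_zero' (g := fun r => ‖f 0‖ * ‖φ r‖ + C * 2 ^ N * ‖(r:ℂ) ^ N * φ r‖)
    · filter_upwards with r using norm_nonneg _
    · filter_upwards [hl] with r hr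
      have h1 : ‖f r * φ r‖ ≤ (‖f 0‖ + C * (1 + |r|) ^ N) * ‖φ r‖ := by
        rw [norm_mul]
        exact mul_le_mul_of_nonneg_right (key r) (norm_nonneg _)
      have h2 : (1 + |r|) ^ N ≤ 2 ^ N * |r| ^ N := by
        rw [← mul_pow]
        exact pow_le_pow_left₀ (by positivity) (by linarith) N
      have h3 : ‖(r:ℂ) ^ N * φ r‖ = |r| ^ N * ‖φ r‖ := by
        rw [norm_mul, norm_pow, Complex.norm_real, Real.norm_eq_abs]
      calc ‖f r * φ r‖ ≤ (‖f 0‖ + C * (1 + |r|) ^ N) * ‖φ r‖ := h1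
        _ ≤ (‖f 0‖ + C * (2 ^ N * |r| ^ N)) * ‖φ r‖ := by
            apply mul_le_mul_of_nonneg_right _ (norm_nonneg _)
            have := mul_le_mul_of_nonneg_left h2 hC.le
            linarith
        _ = ‖f 0‖ * ‖φ r‖ + C * 2 ^ N * ‖(r:ℂ) ^ N * φ r‖ := by rw [h3]; ring
    · have t1 : Tendsto (fun r : ℝ => ‖f 0‖ * ‖φ r‖) l (nhds 0) := by
        simpa using (h0.norm.const_mul ‖f 0‖)
      have t2 : Tendsto (fun r : ℝ => C * 2 ^ N * ‖(r:ℂ) ^ N * φ r‖) l (nhds 0) := by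
        simpa using (hNφ.norm.const_mul (C * 2 ^ N))
      simpa using t1.add t2
  have hφ0 : ∀ l : Filter ℝ, Tendsto (fun x : ℝ => (x:ℂ) ^ (0:ℕ) * iteratedDeriv 0 φ x) l (nhds 0) →
      Tendsto (fun x : ℝ => φ x) l (nhds 0) := by
    intro l h; simpa [iteratedDeriv_zero] using h
  have hφN : ∀ l : Filter ℝ, Tendsto (fun x : ℝ => (x:ℂ) ^ N * iteratedDeriv 0 φ x) l (nhds 0) →
      Tendsto (fun x : ℝ => (x:ℂ) ^ N * φ x) l (nhds 0) := by
    intro l h; simpa [iteratedDeriv_zero] using h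
  constructor
  · exact main atTop ((eventually_ge_atTop 1).mono fun r hr => le_trans hr (le_abs_self r))
      (hφ0 _ (hφ.2 0 0).1) (hφN _ (hφ.2 N 0).1)
  · exact main atBot ((eventually_le_atBot (-1)).mono fun r hr => le_trans (by linarith) (neg_le_abs r))
      (hφ0 _ (hφ.2 0 0).2) (hφN _ (hφ.2 N 0).2)
end

section
/- Let f : ℝ → ℂ be differentiable at every point of ℝ, and suppose that both f and its derivative f' are locally integrable functions of slow growth. Then for every Schwartz function φ, ∫_{-∞}^{∞} f'(x) φ(x) dx = -∫_{-∞}^{∞} f(x) φ'(x) dx (both integrals being absolutely convergent). -/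
open MeasureTheory Filter

/-- A continuous function vanishing at `±∞` is bounded. -/
lemma aux_bdd (ψ : ℝ → ℂ) (hc : Continuous ψ)
    (h1 : Tendsto ψ atTop (nhds 0)) (h2 : Tendsto ψ atBot (nhds 0)) :
    ∃ D : ℝ, ∀ x, ‖ψ x‖ ≤ D := by
  have h1' : Tendsto (fun x => ‖ψ x‖) atTop (nhds 0) := by simpa using h1.norm
  have h2' : Tendsto (fun x => ‖ψ x‖) atBot (nhds 0) := by simpa using h2.norm
  obtain ⟨a, ha⟩ := eventually_atTop.1 (h1'.eventually_lt_const one_pos)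
  obtain ⟨b, hb⟩ := eventually_atBot.1 (h2'.eventually_lt_const one_pos)
  obtain ⟨M, hM⟩ := (isCompact_Icc (a := b) (b := a)).exists_bound_of_continuousOn
    hc.continuousOn
  refine ⟨max M 1, fun x => ?_⟩
  rcases le_total x a with hxa | hxa
  · rcases le_total b x with hbx | hbx
    · exact le_max_of_le_left (hM x ⟨hbx, hxa⟩)
    · exact le_max_of_le_right (hb x hbx).le
  · exact le_max_of_le_right (ha x hxa).le

/-- Polynomial decay of derivatives of Schwartz functions. -/
lemma schwartz_decay (φ : ℝ → ℂ) (hφ : IsSchwartz φ) (n M : ℕ) :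
    ∃ D : ℝ, 0 ≤ D ∧ ∀ x : ℝ, ‖iteratedDeriv n φ x‖ * (1 + |x|) ^ M ≤ D := by
  have hcont : Continuous (iteratedDeriv n φ) := hφ.1.continuous_iteratedDeriv n (by exact_mod_cast le_top)
  have key : ∀ m : ℕ, ∃ Dm : ℝ, ∀ x : ℝ, |x| ^ m * ‖iteratedDeriv n φ x‖ ≤ Dm := by
    intro m
    obtain ⟨Dm, hDm⟩ := aux_bdd (fun x => (x : ℂ) ^ m * iteratedDeriv n φ x)
      ((Complex.continuous_ofReal.pow m).mul hcont) (hφ.2 m n).1 (hφ.2 m n).2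
    refine ⟨Dm, fun x => ?_⟩
    have := hDm x
    simpa [norm_mul, norm_pow, Complex.norm_real] using this
  obtain ⟨D0, hD0⟩ := key 0
  obtain ⟨DM, hDM⟩ := key M
  have hD0' : (0:ℝ) ≤ D0 := le_trans (by positivity) (hD0 0)
  have hDM0 : (0:ℝ) ≤ DM := by
    have := hDM 1
    have h0 : (0:ℝ) ≤ |(1:ℝ)| ^ M * ‖iteratedDeriv n φ 1‖ := by positivity
    linarith
  refine ⟨2 ^ M * (D0 + DM), by positivity, fun x => ?_⟩
  set t := |x| with ht
  have ht0 : 0 ≤ t := abs_nonneg x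
  have h1 : (1 + t) ^ M ≤ 2 ^ M * (1 + t ^ M) := by
    have hmax : (1 + t) ≤ 2 * max 1 t := by
      rcases le_total 1 t with h | h
      · rw [max_eq_right h]; linarith
      · rw [max_eq_left h]; linarith
    calc (1 + t) ^ M ≤ (2 * max 1 t) ^ M :=
          pow_le_pow_left₀ (by linarith) hmax M
      _ = 2 ^ M * (max 1 t) ^ M := by rw [mul_pow]
      _ ≤ 2 ^ M * (1 + t ^ M) := by
          gcongr
          rcases le_total 1 t with h | h
          · rw [max_eq_right h]; nlinarith [pow_nonneg ht0 M]
          · rw [max_eq_left h, one_pow]; nlinarith [pow_nonneg ht0 M]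
  have hψ0 : ‖iteratedDeriv n φ x‖ ≤ D0 := by simpa using hD0 x
  have hψM : t ^ M * ‖iteratedDeriv n φ x‖ ≤ DM := hDM x
  have hψn : (0:ℝ) ≤ ‖iteratedDeriv n φ x‖ := norm_nonneg _
  calc ‖iteratedDeriv n φ x‖ * (1 + t) ^ M
      ≤ ‖iteratedDeriv n φ x‖ * (2 ^ M * (1 + t ^ M)) := by
        exact mul_le_mul_of_nonneg_left h1 hψn
    _ = 2 ^ M * (‖iteratedDeriv n φ x‖ + t ^ M * ‖iteratedDeriv n φ x‖) := by ring
    _ ≤ 2 ^ M * (D0 + DM) :=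
        mul_le_mul_of_nonneg_left (add_le_add hψ0 hψM) (by positivity)

set_option maxHeartbeats 1000000 in
/-- A slow-growth function times a polynomially decaying continuous function is integrable. -/
lemma integrable_mul_decay (g ψ : ℝ → ℂ) (hg : LocallyIntegrable g volume)
    (C : ℝ) (N : ℕ) (hgrow : ∀ R : ℝ, 0 < R → ∫ x in (-R)..R, ‖g x‖ ≤ C * (1 + R) ^ N)
    (hψc : Continuous ψ) (D : ℝ) (hD : 0 ≤ D)
    (hdec : ∀ x : ℝ, ‖ψ x‖ * (1 + |x|) ^ (N + 2) ≤ D) :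
    Integrable (fun x : ℝ => g x * ψ x) := by
  have hC : 0 ≤ C := by
    have h1 := hgrow 1 one_pos
    have h2 : (0:ℝ) ≤ ∫ x in (-1:ℝ)..1, ‖g x‖ :=
      intervalIntegral.integral_nonneg (by norm_num) (fun x _ => norm_nonneg _)
    nlinarith [pow_pos (by norm_num : (0:ℝ) < 1 + 1) N]
  have hIcc : ∀ a b : ℝ, IntegrableOn (fun x => g x * ψ x) (Set.uIcc a b) volume :=
    fun a b => (hg.integrableOn_isCompact isCompact_uIcc).mul_continuousOn
      hψc.continuousOn isCompact_uIcc
  have hII' : ∀ a b : ℝ, IntervalIntegrable (fun x => g x * ψ x) volume a b :=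
    fun a b => (hIcc a b).intervalIntegrable
  have hII : ∀ a b : ℝ, IntervalIntegrable (fun x => ‖g x * ψ x‖) volume a b :=
    fun a b => (hII' a b).norm
  have hIIg' : ∀ a b : ℝ, IntervalIntegrable g volume a b :=
    fun a b => (hg.integrableOn_isCompact isCompact_uIcc).intervalIntegrable
  have hIIg : ∀ a b : ℝ, IntervalIntegrable (fun x => ‖g x‖) volume a b :=
    fun a b => (hIIg' a b).norm
  set P : ℝ := C * D * 2 ^ N with hP
  have hPnn : 0 ≤ P := by positivity
  -- shell bound
  have shell : ∀ (k : ℕ) (a b : ℝ), -((k:ℝ)+1) ≤ a → a ≤ b → b ≤ (k:ℝ)+1 →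
      (∀ x ∈ Set.Icc a b, (k:ℝ) ≤ |x|) →
      ∫ x in a..b, ‖g x * ψ x‖ ≤ P / (1 + (k:ℝ)) ^ 2 := by
    intro k a b hca hab hbd habs
    have hk1 : (0:ℝ) < 1 + (k:ℝ) := by positivity
    have step1 : ∫ x in a..b, ‖g x * ψ x‖ ≤
        ∫ x in a..b, (D / (1 + (k:ℝ)) ^ (N + 2)) * ‖g x‖ := by
      apply intervalIntegral.integral_mono_on hab (hII a b)
        ((hIIg a b).const_mul _)
      intro x hx
      have hkx : (k:ℝ) ≤ |x| := habs x hx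
      have hpow : (1 + (k:ℝ)) ^ (N + 2) ≤ (1 + |x|) ^ (N + 2) :=
        pow_le_pow_left₀ (by positivity) (by linarith) _
      have hψx : ‖ψ x‖ * (1 + (k:ℝ)) ^ (N + 2) ≤ D :=
        le_trans (mul_le_mul_of_nonneg_left hpow (norm_nonneg _)) (hdec x)
      have hψx' : ‖ψ x‖ ≤ D / (1 + (k:ℝ)) ^ (N + 2) :=
        (le_div_iff₀ (by positivity)).2 hψx
      calc ‖g x * ψ x‖ = ‖g x‖ * ‖ψ x‖ := norm_mul _ _
        _ ≤ ‖g x‖ * (D / (1 + (k:ℝ)) ^ (N + 2)) := by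
            exact mul_le_mul_of_nonneg_left hψx' (norm_nonneg _)
        _ = (D / (1 + (k:ℝ)) ^ (N + 2)) * ‖g x‖ := by ring
    have step2 : ∫ x in a..b, ‖g x‖ ≤ ∫ x in (-((k:ℝ)+1))..((k:ℝ)+1), ‖g x‖ :=
      intervalIntegral.integral_mono_interval hca hab hbd
        (ae_of_all _ fun x => norm_nonneg _) (hIIg _ _)
    have step3 : ∫ x in (-((k:ℝ)+1))..((k:ℝ)+1), ‖g x‖ ≤ C * (1 + ((k:ℝ)+1)) ^ N :=
      hgrow ((k:ℝ)+1) (by positivity)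
    have hgnn : 0 ≤ ∫ x in a..b, ‖g x‖ :=
      intervalIntegral.integral_nonneg hab (fun x _ => norm_nonneg _)
    have hDd : 0 ≤ D / (1 + (k:ℝ)) ^ (N + 2) := by positivity
    calc ∫ x in a..b, ‖g x * ψ x‖
        ≤ ∫ x in a..b, (D / (1 + (k:ℝ)) ^ (N + 2)) * ‖g x‖ := step1
      _ = (D / (1 + (k:ℝ)) ^ (N + 2)) * ∫ x in a..b, ‖g x‖ := by
          rw [intervalIntegral.integral_const_mul]
      _ ≤ (D / (1 + (k:ℝ)) ^ (N + 2)) * (C * (1 + ((k:ℝ)+1)) ^ N) := by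
          exact mul_le_mul_of_nonneg_left (step2.trans step3) hDd
      _ ≤ (D / (1 + (k:ℝ)) ^ (N + 2)) * (C * (2 * (1 + (k:ℝ))) ^ N) := by
          gcongr
          linarith
      _ = P / (1 + (k:ℝ)) ^ 2 := by
          rw [hP]
          rw [mul_pow, pow_add]
          field_simp
  -- main induction
  have main : ∀ k : ℕ, ∫ x in (-(k:ℝ))..(k:ℝ), ‖g x * ψ x‖ ≤
      (2 * P) * (2 - 2 / ((k:ℝ) + 1)) := by
    intro k
    induction k with
    | zero => simp
    | succ k ih =>
      have hk0 : (0:ℝ) ≤ (k:ℝ) := Nat.cast_nonneg k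
      have h1 : (0:ℝ) < (k:ℝ) + 1 := by positivity
      have h2 : (0:ℝ) < (k:ℝ) + 2 := by positivity
      have split1 : ∫ x in (-((k:ℝ)+1))..((k:ℝ)+1), ‖g x * ψ x‖ =
          (∫ x in (-((k:ℝ)+1))..(-(k:ℝ)), ‖g x * ψ x‖) +
          (∫ x in (-(k:ℝ))..((k:ℝ)), ‖g x * ψ x‖) +
          (∫ x in ((k:ℝ))..((k:ℝ)+1), ‖g x * ψ x‖) := by
        rw [intervalIntegral.integral_add_adjacent_intervals (hII _ _) (hII _ _),
          intervalIntegral.integral_add_adjacent_intervals (hII _ _) (hII _ _)]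
      have sL : ∫ x in (-((k:ℝ)+1))..(-(k:ℝ)), ‖g x * ψ x‖ ≤ P / (1 + (k:ℝ)) ^ 2 := by
        apply shell k _ _ le_rfl (by linarith) (by linarith)
        intro x hx
        have : x ≤ -(k:ℝ) := hx.2
        rw [abs_of_nonpos (by linarith)]
        linarith
      have sR : ∫ x in ((k:ℝ))..((k:ℝ)+1), ‖g x * ψ x‖ ≤ P / (1 + (k:ℝ)) ^ 2 := by
        apply shell k _ _ (by linarith) (by linarith) le_rfl
        intro x hx
        exact hx.1.trans (le_abs_self x)
      have key : (2:ℝ) / ((1 + (k:ℝ)) ^ 2) ≤ 2 * (2 / ((k:ℝ) + 1) - 2 / ((k:ℝ) + 2)) := by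
        have e : 2 / ((k:ℝ) + 1) - 2 / ((k:ℝ) + 2) = 2 / (((k:ℝ) + 1) * ((k:ℝ) + 2)) := by
          field_simp
          ring
        rw [e, show (2:ℝ) * (2 / (((k:ℝ) + 1) * ((k:ℝ) + 2))) =
          4 / (((k:ℝ) + 1) * ((k:ℝ) + 2)) by ring]
        rw [div_le_div_iff₀ (by positivity) (by positivity)]
        nlinarith
      have hprod := mul_le_mul_of_nonneg_left key hPnn
      push_cast
      rw [split1]
      calc (∫ x in (-((k:ℝ)+1))..(-(k:ℝ)), ‖g x * ψ x‖) +
            (∫ x in (-(k:ℝ))..((k:ℝ)), ‖g x * ψ x‖) +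
            (∫ x in ((k:ℝ))..((k:ℝ)+1), ‖g x * ψ x‖)
          ≤ P / (1 + (k:ℝ)) ^ 2 + 2 * P * (2 - 2 / ((k:ℝ) + 1)) + P / (1 + (k:ℝ)) ^ 2 :=
            add_le_add (add_le_add sL ih) sR
        _ = 2 * P * (2 - 2 / ((k:ℝ) + 1)) + P * (2 / (1 + (k:ℝ)) ^ 2) := by ring
        _ ≤ 2 * P * (2 - 2 / ((k:ℝ) + 1)) +
            P * (2 * (2 / ((k:ℝ) + 1) - 2 / ((k:ℝ) + 2))) := by linarith [hprod]
        _ = 2 * P * (2 - 2 / ((k:ℝ) + 1 + 1)) := by ring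
  -- conclude
  apply MeasureTheory.integrable_of_intervalIntegral_norm_bounded
    (l := (atTop : Filter ℕ)) (a := fun n : ℕ => -(n:ℝ)) (b := fun n : ℕ => (n:ℝ)) (4 * P)
  · intro i
    exact (hIcc (-(i:ℝ)) i).mono_set (Set.Ioc_subset_Icc_self.trans Set.Icc_subset_uIcc)
  · exact tendsto_neg_atTop_atBot.comp tendsto_natCast_atTop_atTop
  · exact tendsto_natCast_atTop_atTop
  · apply Eventually.of_forall
    intro k
    refine (main k).trans ?_
    have h0 : (0:ℝ) ≤ 2 / ((k:ℝ) + 1) := by positivity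
    nlinarith

set_option maxHeartbeats 2000000 in
/-- Integration by parts over `ℝ`: if `f` is everywhere differentiable and `f`, `f'` are
locally integrable functions of slow growth, then for every Schwartz function `φ`,
`∫ f'(x) φ(x) dx = -∫ f(x) φ'(x) dx`, both integrals being absolutely convergent. -/
theorem integration_by_parts_slowGrowth_schwartz (f : ℝ → ℂ)
    (hdiff : Differentiable ℝ f) (hf : SlowGrowth f) (hf' : SlowGrowth (deriv f))
    (φ : ℝ → ℂ) (hφ : IsSchwartz φ) :
    Integrable (fun x : ℝ => deriv f x * φ x) ∧
    Integrable (fun x : ℝ => f x * deriv φ x) ∧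
    ∫ x : ℝ, deriv f x * φ x = -∫ x : ℝ, f x * deriv φ x := by
  obtain ⟨hfloc, C₁, hC₁, N₁, hgrow₁⟩ := hf
  obtain ⟨hf'loc, C₂, hC₂, N₂, hgrow₂⟩ := hf'
  have hφcont : Continuous φ := hφ.1.continuous
  have hφ'cont : Continuous (deriv φ) := hφ.1.continuous_deriv (by simp)
  have hφdiff : Differentiable ℝ φ := hφ.1.differentiable (by simp)
  -- decay bounds for φ and deriv φ
  obtain ⟨D₁, hD₁, hdec₁⟩ := schwartz_decay φ hφ 0 (N₂ + 2)
  obtain ⟨D₂, hD₂, hdec₂⟩ := schwartz_decay φ hφ 1 (N₁ + 2)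
  rw [iteratedDeriv_zero] at hdec₁
  rw [iteratedDeriv_one] at hdec₂
  have int1 : Integrable (fun x : ℝ => deriv f x * φ x) :=
    integrable_mul_decay (deriv f) φ hf'loc C₂ N₂ hgrow₂ hφcont D₁ hD₁ hdec₁
  have int2 : Integrable (fun x : ℝ => f x * deriv φ x) :=
    integrable_mul_decay f (deriv φ) hfloc C₁ N₁ hgrow₁ hφ'cont D₂ hD₂ hdec₂
  refine ⟨int1, int2, ?_⟩
  -- pointwise polynomial bound for f
  have hf'II : ∀ a b : ℝ, IntervalIntegrable (deriv f) volume a b :=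
    fun a b => (hf'loc.integrableOn_isCompact isCompact_uIcc).intervalIntegrable
  have hf'nII : ∀ a b : ℝ, IntervalIntegrable (fun x => ‖deriv f x‖) volume a b :=
    fun a b => (hf'II a b).norm
  have hfbound : ∀ x : ℝ, ‖f x‖ ≤ (‖f 0‖ + C₂ * 2 ^ N₂) * (1 + |x|) ^ N₂ := by
    intro x
    have hftc : ∫ t in (0:ℝ)..x, deriv f t = f x - f 0 :=
      intervalIntegral.integral_deriv_eq_sub (fun t _ => hdiff t) (hf'II 0 x)
    have hb1 : ‖∫ t in (0:ℝ)..x, deriv f t‖ ≤ |∫ t in (0:ℝ)..x, ‖deriv f t‖| :=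
      intervalIntegral.norm_integral_le_abs_integral_norm
    have hb2 : |∫ t in (0:ℝ)..x, ‖deriv f t‖| ≤ ∫ t in (-(|x|+1))..(|x|+1), ‖deriv f t‖ := by
      rcases le_total 0 x with hx | hx
      · rw [abs_of_nonneg (intervalIntegral.integral_nonneg hx (fun t _ => norm_nonneg _))]
        apply intervalIntegral.integral_mono_interval (by
            have := abs_nonneg x; linarith) hx (by
            have := le_abs_self x; linarith)
          (ae_of_all _ fun t => norm_nonneg _) (hf'nII _ _)
      · rw [intervalIntegral.integral_symm,
          abs_neg,
          abs_of_nonneg (intervalIntegral.integral_nonneg hx (fun t _ => norm_nonneg _))]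
        apply intervalIntegral.integral_mono_interval (by
            have := neg_abs_le x; linarith) hx (by
            have := abs_nonneg x; linarith)
          (ae_of_all _ fun t => norm_nonneg _) (hf'nII _ _)
    have hb3 : ∫ t in (-(|x|+1))..(|x|+1), ‖deriv f t‖ ≤ C₂ * (1 + (|x|+1)) ^ N₂ :=
      hgrow₂ (|x|+1) (by positivity)
    have hb4 : C₂ * (1 + (|x|+1)) ^ N₂ ≤ C₂ * 2 ^ N₂ * (1 + |x|) ^ N₂ := by
      rw [mul_assoc, ← mul_pow]
      gcongr
      have := abs_nonneg x
      linarith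
    have hfx : ‖f x‖ ≤ ‖f 0‖ + ‖∫ t in (0:ℝ)..x, deriv f t‖ := by
      calc ‖f x‖ = ‖f 0 + (f x - f 0)‖ := by ring_nf
        _ ≤ ‖f 0‖ + ‖f x - f 0‖ := norm_add_le _ _
        _ = ‖f 0‖ + ‖∫ t in (0:ℝ)..x, deriv f t‖ := by rw [hftc]
    have hpow1 : (1:ℝ) ≤ (1 + |x|) ^ N₂ :=
      one_le_pow₀ (by have := abs_nonneg x; linarith)
    have h0 : (0:ℝ) ≤ ‖f 0‖ := norm_nonneg _
    nlinarith [hfx, hb1.trans (hb2.trans (hb3.trans hb4))]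
  -- boundary terms tend to zero
  obtain ⟨D₃, hD₃, hdec₃⟩ := schwartz_decay φ hφ 0 (N₂ + 1)
  rw [iteratedDeriv_zero] at hdec₃
  set A : ℝ := ‖f 0‖ + C₂ * 2 ^ N₂ with hA
  have hAnn : 0 ≤ A := by
    have := hfbound 0
    simp at this
    have h0 : (0:ℝ) ≤ ‖f 0‖ := norm_nonneg _
    positivity
  have hbnd : ∀ x : ℝ, ‖f x * φ x‖ ≤ A * D₃ / (1 + |x|) := by
    intro x
    have hx1 : (0:ℝ) < 1 + |x| := by positivity
    have h1 : ‖φ x‖ ≤ D₃ / (1 + |x|) ^ (N₂ + 1) :=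
      (le_div_iff₀ (by positivity)).2 (hdec₃ x)
    have h2 : ‖f x * φ x‖ ≤ (A * (1 + |x|) ^ N₂) * (D₃ / (1 + |x|) ^ (N₂ + 1)) := by
      rw [norm_mul]
      exact mul_le_mul (hfbound x) h1 (norm_nonneg _) (by positivity)
    refine h2.trans (le_of_eq ?_)
    rw [pow_succ]
    field_simp
  have hdiv_top : Tendsto (fun x : ℝ => A * D₃ / (1 + |x|)) atTop (nhds 0) := by
    apply Tendsto.div_atTop tendsto_const_nhds
    apply tendsto_atTop_add_const_left
    exact tendsto_abs_atTop_atTop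
  have hdiv_bot : Tendsto (fun x : ℝ => A * D₃ / (1 + |x|)) atBot (nhds 0) := by
    apply Tendsto.div_atTop tendsto_const_nhds
    apply tendsto_atTop_add_const_left
    exact tendsto_abs_atBot_atTop
  have htop : Tendsto (fun x : ℝ => f x * φ x) atTop (nhds 0) :=
    squeeze_zero_norm hbnd hdiv_top
  have hbot : Tendsto (fun x : ℝ => f x * φ x) atBot (nhds 0) :=
    squeeze_zero_norm hbnd hdiv_bot
  -- integration by parts on [-n, n]
  have hφII : ∀ a b : ℝ, IntervalIntegrable (deriv φ) volume a b :=
    fun a b => hφ'cont.intervalIntegrable a b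
  have ibp : ∀ n : ℕ, ∫ x in (-(n:ℝ))..(n:ℝ), (deriv f x * φ x + f x * deriv φ x) =
      f (n:ℝ) * φ (n:ℝ) - f (-(n:ℝ)) * φ (-(n:ℝ)) := by
    intro n
    exact intervalIntegral.integral_deriv_mul_eq_sub
      (fun x _ => (hdiff x).hasDerivAt) (fun x _ => (hφdiff x).hasDerivAt)
      (hf'II _ _) (hφII _ _)
  have hsum : Integrable (fun x : ℝ => deriv f x * φ x + f x * deriv φ x) := int1.add int2
  have hlim1 : Tendsto (fun n : ℕ => ∫ x in (-(n:ℝ))..(n:ℝ),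
      (deriv f x * φ x + f x * deriv φ x)) atTop
      (nhds (∫ x : ℝ, (deriv f x * φ x + f x * deriv φ x))) :=
    intervalIntegral_tendsto_integral hsum
      (tendsto_neg_atTop_atBot.comp tendsto_natCast_atTop_atTop) tendsto_natCast_atTop_atTop
  have hlim2 : Tendsto (fun n : ℕ => ∫ x in (-(n:ℝ))..(n:ℝ),
      (deriv f x * φ x + f x * deriv φ x)) atTop (nhds 0) := by
    simp only [ibp]
    have ht : Tendsto (fun n : ℕ => f (n:ℝ) * φ (n:ℝ)) atTop (nhds 0) :=
      htop.comp tendsto_natCast_atTop_atTop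
    have hb : Tendsto (fun n : ℕ => f (-(n:ℝ)) * φ (-(n:ℝ))) atTop (nhds 0) :=
      hbot.comp (tendsto_neg_atTop_atBot.comp tendsto_natCast_atTop_atTop)
    simpa using ht.sub hb
  have hzero : ∫ x : ℝ, (deriv f x * φ x + f x * deriv φ x) = 0 :=
    tendsto_nhds_unique hlim1 hlim2
  rw [integral_add int1 int2] at hzero
  linear_combination hzero
end
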